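/- arXiv:1505.06164 — 3 statements merged into one kernel-verified Lean document; each statement's English description precedes it below -/
import Mathlib

section
/- For any nonnegative integer k and real x > 0, the function t ↦ exp(-(t(x+k) + k·ln(2 - e^t))) on 0 < t < ln 2 attains its infimum value (x+2k)^{x+2k} / ((2x+2k)^{x+k} (2k)^k), which is achieved at t = ln((2x+2k)/(x+2k)). -/
open Real

theorem stmt2 (k : ℕ) (hk : 1 ≤ k) (x : ℝ) (hx : 0 < x) :
    let f : ℝ → ℝ := fun t => exp (-(t * (x + k) + k * log (2 - exp t)))
    let t₀ : ℝ := log ((2 * x + 2 * k) / (x + 2 * k))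
    t₀ ∈ Set.Ioo 0 (log 2) ∧
    f t₀ = (x + 2 * k) ^ (x + 2 * k) /
        ((2 * x + 2 * k) ^ (x + k) * (2 * k : ℝ) ^ (k : ℝ)) ∧
    ∀ t ∈ Set.Ioo (0 : ℝ) (log 2), f t₀ ≤ f t := by
  intro f t₀
  have hk' : (1:ℝ) ≤ (k:ℝ) := by exact_mod_cast hk
  have hkpos : (0:ℝ) < k := by linarith
  have hA : (0:ℝ) < x + 2*k := by linarith
  have hB : (0:ℝ) < 2*x + 2*k := by linarith
  have hC : (0:ℝ) < 2*k := by linarith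
  have hr : (0:ℝ) < (2*x+2*k)/(x+2*k) := div_pos hB hA
  have hr1 : (1:ℝ) < (2*x+2*k)/(x+2*k) := by
    rw [lt_div_iff₀ hA]; linarith
  have hr2 : (2*x+2*k)/(x+2*k) < 2 := by
    rw [div_lt_iff₀ hA]; linarith
  have ht0 : exp t₀ = (2*x+2*k)/(x+2*k) := exp_log hr
  have hy0 : 2 - exp t₀ = 2*k/(x+2*k) := by
    rw [ht0]; field_simp; ring
  have ht0pos : 0 < t₀ := log_pos hr1
  have ht0lt : t₀ < log 2 := log_lt_log hr hr2
  refine ⟨⟨ht0pos, ht0lt⟩, ?_, ?_⟩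
  · have ht0eq : t₀ = log (2*x+2*k) - log (x+2*k) := log_div (ne_of_gt hB) (ne_of_gt hA)
    have hlog2 : log (2*k/(x+2*k)) = log (2*k) - log (x+2*k) :=
      log_div (ne_of_gt hC) (ne_of_gt hA)
    show exp (-(t₀ * (x + k) + k * log (2 - exp t₀))) = _
    rw [hy0, hlog2, ht0eq]
    rw [Real.rpow_def_of_pos hA, Real.rpow_def_of_pos hB, Real.rpow_def_of_pos hC,
        ← Real.exp_add, ← Real.exp_sub, Real.exp_eq_exp]
    ring
  · intro t ht
    obtain ⟨ht1, ht2⟩ := ht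
    have het : exp t < 2 := by
      have := exp_lt_exp.mpr ht2
      rwa [exp_log (by norm_num : (0:ℝ) < 2)] at this
    have hpos : 0 < 2 - exp t := by linarith
    have hy0pos : (0:ℝ) < 2*k/(x+2*k) := div_pos hC hA
    have key : t * (x + k) + k * log (2 - exp t) ≤ t₀ * (x + k) + k * log (2 - exp t₀) := by
      have l1 : log (2 - exp t) - log (2 - exp t₀) ≤ (2 - exp t)/(2 - exp t₀) - 1 := by
        rw [← log_div (ne_of_gt hpos) (by rw [hy0]; positivity)]
        exact log_le_sub_one_of_pos (div_pos hpos (by rw [hy0]; positivity))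
      have l2 : (t - t₀) + 1 ≤ exp (t - t₀) := add_one_le_exp _
      have hets : exp (t - t₀) = exp t / exp t₀ := exp_sub t t₀
      rw [hy0] at l1
      rw [hets, ht0] at l2
      have e1 : k * log (2 - exp t) ≤ k * log (2 - exp t₀)
          + (x+2*k)/2 * ((2*x+2*k)/(x+2*k) - exp t) := by
        have h := mul_le_mul_of_nonneg_left l1 (le_of_lt hkpos)
        have hd : (2 - exp t)/(2*k/(x+2*k)) - 1
            = (x+2*k)/(2*k) * ((2*x+2*k)/(x+2*k) - exp t) := by
          field_simp; ring
        rw [hd] at h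
        rw [hy0]
        have hd2 : (k:ℝ) * ((x+2*k)/(2*k) * ((2*x+2*k)/(x+2*k) - exp t))
            = (x+2*k)/2 * ((2*x+2*k)/(x+2*k) - exp t) := by
          field_simp
        linarith [h, hd2]
      have e2 : (t - t₀) * (x + k) ≤ (x+2*k)/2 * (exp t - (2*x+2*k)/(x+2*k)) := by
        have hxk : (0:ℝ) < x + k := by linarith
        have h := mul_le_mul_of_nonneg_right l2 (le_of_lt hxk)
        have hd : (exp t / ((2*x+2*k)/(x+2*k))) * (x+k)
            = (x+2*k)/2 * exp t := by
          field_simp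
        have hd2 : (x+2*k)/2 * ((2*x+2*k)/(x+2*k)) = x + k := by
          field_simp
        rw [hd] at h
        linarith [h, hd2]
      linarith [e1, e2]
    show exp (-(t₀ * (x + (k:ℝ)) + k * log (2 - exp t₀))) ≤
        exp (-(t * (x + (k:ℝ)) + k * log (2 - exp t)))
    exact exp_le_exp.mpr (neg_le_neg key)
end

section
/- There exist constants c, C ∈ (0, ∞) such that for every positive integer n and every real x ∈ [-n, ∞), K_n(x) := (x+2n)^{x+2n} / ((2x+2n)^{x+n} (2n)^n) satisfies K_n(x) ≤ C · exp(-c·n·min(|x|/n, x²/n²)). -/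
/-!
Put `a = x + n ≥ 0` and `b = n`. Then `K_n(x) = exp (-G)`, where
`G = a log a + b log b - (a + b) log ((a + b) / 2)` is twice the midpoint Jensen gap of
`t ↦ t log t`. This function is `1 / max a b`-strongly convex on `[0, max a b]` (its second
derivative is `1 / t`), so `G ≥ (a - b)² / (4 max a b) = x² / (4 max (x + n) n)`, which is at least
`n min (|x| / n, x² / n²) / 8`.
-/

open Real Set

lemma strongConvexOn_mul_log {M : ℝ} (hM : 0 < M) :
    StrongConvexOn (Icc 0 M) M⁻¹ fun t ↦ t * log t := by
  rw [strongConvexOn_iff_convex]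
  simp_rw [Real.norm_eq_abs, sq_abs]
  refine convexOn_of_hasDerivWithinAt2_nonneg (f' := fun t ↦ log t + 1 - M⁻¹ * t)
    (f'' := fun t ↦ t⁻¹ - M⁻¹) (convex_Icc 0 M)
    (continuous_mul_log.sub (by fun_prop)).continuousOn ?_ ?_ ?_ <;>
    rw [interior_Icc] <;> rintro t ⟨ht0, htM⟩
  · exact ((((hasDerivAt_id' t).fun_mul (hasDerivAt_log ht0.ne')).fun_sub
      ((hasDerivAt_pow 2 t).const_mul (M⁻¹ / 2))).congr_deriv (by field_simp; ring)).hasDerivWithinAt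
  · exact ((((hasDerivAt_log ht0.ne').add_const 1).fun_sub
      ((hasDerivAt_id' t).const_mul M⁻¹)).congr_deriv (by ring)).hasDerivWithinAt
  · exact sub_nonneg.2 (inv_anti₀ ht0 htM.le)

lemma sq_sub_div_max_le_mul_log_gap {a b : ℝ} (ha : 0 ≤ a) (hb : 0 ≤ b) :
    (a - b) ^ 2 / (4 * max a b) ≤ a * log a + b * log b - (a + b) * log ((a + b) / 2) := by
  rcases (le_max_of_le_left ha : (0 : ℝ) ≤ max a b).eq_or_lt with hM | hM
  · obtain ⟨rfl, rfl⟩ : a = 0 ∧ b = 0 := ⟨by grind, by grind⟩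
    simp
  have hmid := (strongConvexOn_mul_log hM).2 ⟨ha, le_max_left a b⟩ ⟨hb, le_max_right a b⟩
    (by norm_num : (0 : ℝ) ≤ 1 / 2) (by norm_num : (0 : ℝ) ≤ 1 / 2) (by norm_num)
  simp only [smul_eq_mul, Real.norm_eq_abs, sq_abs] at hmid
  rw [div_le_iff₀ (by positivity)]
  field_simp at hmid
  linarith

lemma two_mul_rpow_self {t : ℝ} (ht : 0 ≤ t) : (2 * t) ^ t = exp (t * log 2 + t * log t) := by
  rcases ht.eq_or_lt with rfl | ht
  · simp
  rw [rpow_def_of_pos (by positivity), log_mul two_ne_zero ht.ne']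
  ring_nf

lemma add_rpow_add_div_eq_exp {a b : ℝ} (ha : 0 ≤ a) (hb : 0 < b) :
    (a + b) ^ (a + b) / ((2 * a) ^ a * (2 * b) ^ b) =
      exp (-(a * log a + b * log b - (a + b) * log ((a + b) / 2))) := by
  rw [rpow_def_of_pos (by linarith), two_mul_rpow_self ha, two_mul_rpow_self hb.le,
    ← exp_add, ← exp_sub, log_div (by linarith) two_ne_zero]
  ring_nf

lemma mul_min_div_le_sq_div_max {n x : ℝ} (hn : 0 < n) :
    n * min (|x| / n) (x ^ 2 / n ^ 2) / 8 ≤ x ^ 2 / (4 * max (x + n) n) := by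
  rcases le_or_gt x n with hxn | hxn
  · have hmax : max (x + n) n ≤ 2 * n := max_le (by linarith) (by linarith)
    calc n * min (|x| / n) (x ^ 2 / n ^ 2) / 8 ≤ n * (x ^ 2 / n ^ 2) / 8 := by
          gcongr; exact min_le_right _ _
      _ = x ^ 2 / (4 * (2 * n)) := by field_simp; ring
      _ ≤ x ^ 2 / (4 * max (x + n) n) := by gcongr
  · have hmax : max (x + n) n ≤ 2 * x := max_le (by linarith) (by linarith)
    calc n * min (|x| / n) (x ^ 2 / n ^ 2) / 8 ≤ n * (|x| / n) / 8 := by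
          gcongr; exact min_le_left _ _
      _ = x ^ 2 / (4 * (2 * x)) := by
          rw [abs_of_pos (by linarith)]; field_simp; ring
      _ ≤ x ^ 2 / (4 * max (x + n) n) := by gcongr

theorem stmt3 : ∃ c C : ℝ, 0 < c ∧ 0 < C ∧
    ∀ n : ℕ, 0 < n → ∀ x : ℝ, -(n : ℝ) ≤ x →
      (x + 2 * n) ^ (x + 2 * n) /
          ((2 * x + 2 * n) ^ (x + n) * (2 * n : ℝ) ^ (n : ℝ))
        ≤ C * Real.exp (-c * n * min (|x| / n) (x ^ 2 / n ^ 2)) := by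
  refine ⟨1 / 8, 1, by norm_num, one_pos, fun n hn x hx ↦ ?_⟩
  have hn : (0 : ℝ) < n := Nat.cast_pos.2 hn
  have ha : 0 ≤ x + n := by linarith
  have hK := add_rpow_add_div_eq_exp ha hn
  rw [show x + n + n = x + 2 * n by ring, show 2 * (x + n) = 2 * x + 2 * n by ring] at hK
  rw [hK, one_mul, exp_le_exp]
  have hgap := sq_sub_div_max_le_mul_log_gap ha hn.le
  rw [add_sub_cancel_right, show x + n + n = x + 2 * n by ring] at hgap
  linarith [mul_min_div_le_sq_div_max (x := x) hn]
end

section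
/- Let (Z_j)_{j≥1} be i.i.d. real random variables with mean 0 and variance 1, and for each n let N^{(n)} be an ℕ-valued random variable such that P(|N^{(n)} - E[N^{(n)}]| ≥ x_n) → 0 as n → ∞, where x_n ≥ 0 satisfies x_n/n → 0. Then (1/√n) · Σ_{j ∈ [min(N^{(n)}, E[N^{(n)}]), max(N^{(n)}, E[N^{(n)}])]} Z_j converges to 0 in probability. -/
open MeasureTheory ProbabilityTheory Filter Finset

open scoped Topology

/-! On the event `|N - E N| < x` the summation window lies in `[a, a + 2⌈x⌉]` with
`a = ⌊E N⌋ - ⌈x⌉`, so the window sum is a difference of two partial sums of `(Z (a + j))_j`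
with at most `2⌈x⌉ + 1` terms. Kolmogorov's maximal inequality (Doob's inequality applied to the
square of the partial-sum martingale) bounds the probability that one of them reaches `ε √n / 2`
by `4 (2 |x| + 3) / (ε² n)`, which tends to `0` because `x = o(n)`. -/

theorem Finset.sum_Icc_eq_sum_range_sub_sum_range {M : Type*} [AddCommGroup M] (f : ℕ → M)
    {a lo hi : ℕ} (hlo : a ≤ lo) (hle : lo ≤ hi + 1) :
    ∑ j ∈ Icc lo hi, f j
      = ∑ j ∈ range (hi + 1 - a), f (a + j) - ∑ j ∈ range (lo - a), f (a + j) := by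
  rw [← sum_Ico_eq_sum_range, ← sum_Ico_eq_sum_range, ← sum_Ico_consecutive f hlo hle,
    add_sub_cancel_left, Ico_add_one_right_eq_Icc]

theorem Finset.exists_le_abs_sum_range_of_le_abs_sum_Icc (f : ℕ → ℝ) {a lo hi K : ℕ} {c : ℝ}
    (hc : 0 < c) (hlo : a ≤ lo) (hhi : hi ≤ a + K) (h : 2 * c ≤ |∑ j ∈ Icc lo hi, f j|) :
    ∃ k ≤ K, c ≤ |∑ j ∈ range (k + 1), f (a + j)| := by
  have hle : lo ≤ hi + 1 := by
    by_contra! hlt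
    rw [Icc_eq_empty (by omega), sum_empty, abs_zero] at h
    linarith
  have hprefix : ∀ m ≤ K + 1, c ≤ |∑ j ∈ range m, f (a + j)| →
      ∃ k ≤ K, c ≤ |∑ j ∈ range (k + 1), f (a + j)| := by
    rintro (_ | k) hk hck
    · rw [range_zero, sum_empty, abs_zero] at hck
      linarith
    · exact ⟨k, by omega, hck⟩
  rw [sum_Icc_eq_sum_range_sub_sum_range f hlo hle] at h
  rcases le_or_gt c |∑ j ∈ range (hi + 1 - a), f (a + j)| with hhigh | hhigh
  · exact hprefix _ (by omega) hhigh
  · refine hprefix (lo - a) (by omega) ?_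
    linarith [abs_sub (∑ j ∈ range (hi + 1 - a), f (a + j)) (∑ j ∈ range (lo - a), f (a + j))]

theorem Nat.floor_sub_ceil_le_min_and_max_le {m x : ℝ} {n : ℕ} (h : |(n : ℝ) - m| < x) :
    ⌊m⌋₊ - ⌈x⌉₊ ≤ min n ⌈m⌉₊ ∧ max n ⌊m⌋₊ ≤ ⌊m⌋₊ - ⌈x⌉₊ + 2 * ⌈x⌉₊ := by
  obtain ⟨hlow, hup⟩ := abs_lt.1 h
  have hfloor : ⌊m⌋₊ ≤ n + ⌈x⌉₊ := by
    refine Nat.floor_le_of_le ?_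
    push_cast
    linarith [Nat.le_ceil x]
  have hceil : n < ⌈m⌉₊ + ⌈x⌉₊ := by
    suffices (n : ℝ) < ((⌈m⌉₊ + ⌈x⌉₊ : ℕ) : ℝ) by exact_mod_cast this
    push_cast
    linarith [Nat.le_ceil x, Nat.le_ceil m]
  have := Nat.ceil_le_floor_add_one m
  have := Nat.floor_le_ceil m
  omega


theorem Filter.Tendsto.abs_add_const_div_sq_mul_sqrt {x : ℕ → ℝ}
    (hxn : Tendsto (fun n => x n / n) atTop (𝓝 0)) (a b c : ℝ) :
    Tendsto (fun n : ℕ => (a * |x n| + b) / (c * Real.sqrt n) ^ 2) atTop (𝓝 0) := by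
  have hlim : Tendsto (fun n : ℕ => (a * |x n / n| + b * (1 / (n : ℝ))) / c ^ 2) atTop (𝓝 0) := by
    simpa using ((hxn.abs.const_mul a).add
      (tendsto_one_div_atTop_nhds_zero_nat.const_mul b)).div_const (c ^ 2)
  refine hlim.congr' ?_
  filter_upwards [eventually_ge_atTop 1] with n hn
  have hn' : (0 : ℝ) < n := by exact_mod_cast hn
  rw [abs_div, Nat.abs_cast, mul_pow, Real.sq_sqrt hn'.le]
  field_simp

section KolmogorovInequality

variable {Ω : Type*} {m0 : MeasurableSpace Ω} {μ : Measure Ω}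

theorem MeasureTheory.Martingale.submartingale_sq [IsFiniteMeasure μ] {f : ℕ → Ω → ℝ}
    {ℱ : Filtration ℕ m0} (hf : Martingale f ℱ μ) (hL2 : ∀ i, MemLp (f i) 2 μ) :
    Submartingale (fun i ω => f i ω ^ 2) ℱ μ := by
  refine ⟨fun i => (hf.stronglyAdapted i).pow 2, fun i j hij => ?_, fun i => (hL2 i).integrable_sq⟩
  have hjensen := (even_two.convexOn_pow (𝕜 := ℝ)).map_condExp_le_univ (ℱ.le i)
    (continuous_pow 2).lowerSemicontinuous ((hL2 j).integrable one_le_two) (hL2 j).integrable_sq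
  filter_upwards [hf.condExp_ae_eq hij, hjensen] with ω hω hle
  rw [Function.comp_apply, hω] at hle
  exact hle

theorem MeasureTheory.Martingale.measure_exists_le_abs_le [IsFiniteMeasure μ] {f : ℕ → Ω → ℝ}
    {ℱ : Filtration ℕ m0} (hf : Martingale f ℱ μ) (hL2 : ∀ i, MemLp (f i) 2 μ) (K : ℕ) {c : ℝ}
    (hc : 0 < c) :
    μ {ω | ∃ k ≤ K, c ≤ |f k ω|} ≤ ENNReal.ofReal ((∫ ω, f K ω ^ 2 ∂μ) / c ^ 2) := by
  set S := {ω | c ^ 2 ≤ (range (K + 1)).sup' nonempty_range_add_one fun k => f k ω ^ 2}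
  have hS : {ω | ∃ k ≤ K, c ≤ |f k ω|} = S := by
    ext ω
    simp [S, Finset.le_sup'_iff, sq_le_sq, abs_of_pos hc]
  have hdoob : ENNReal.ofReal (c ^ 2) * μ S ≤ ENNReal.ofReal (∫ ω in S, f K ω ^ 2 ∂μ) := by
    rw [ENNReal.ofReal_eq_coe_nnreal (sq_nonneg c)]
    exact maximal_ineq (hf.submartingale_sq hL2) (fun k ω => sq_nonneg (f k ω)) K
  have hset_le : ∫ ω in S, f K ω ^ 2 ∂μ ≤ ∫ ω, f K ω ^ 2 ∂μ :=
    setIntegral_le_integral (hL2 K).integrable_sq (ae_of_all _ fun ω => sq_nonneg _)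
  rw [hS, ENNReal.ofReal_div_of_pos (by positivity), ENNReal.le_div_iff_mul_le (by simp [hc.ne'])
    (by simp), mul_comm]
  exact hdoob.trans (ENNReal.ofReal_le_ofReal hset_le)

theorem ProbabilityTheory.iIndepFun.martingale_sum_range {Z : ℕ → Ω → ℝ}
    (hsm : ∀ j, StronglyMeasurable (Z j)) (hindep : iIndepFun Z μ)
    (hint : ∀ j, Integrable (Z j) μ) (hmean : ∀ j, μ[Z j] = 0) :
    Martingale (fun k => ∑ j ∈ range (k + 1), Z j) (Filtration.natural Z hsm) μ := by
  have := hindep.isProbabilityMeasure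
  refine martingale_of_condExp_sub_eq_zero_nat (fun k => ?_)
    (fun k => integrable_finsetSum' _ fun j _ => hint j) (fun k => ?_)
  · exact Finset.stronglyMeasurable_sum _ fun j hj =>
      (Filtration.stronglyAdapted_natural hsm j).mono
        ((Filtration.natural Z hsm).mono (Nat.lt_succ_iff.1 (mem_range.1 hj)))
  · rw [sum_range_succ_sub_sum]
    filter_upwards [hindep.condExp_natural_ae_eq_of_lt hsm (Nat.lt_succ_self k)] with ω hω
    simp [hω, hmean]

theorem ProbabilityTheory.iIndepFun.measure_exists_le_abs_sum_range_le {Z : ℕ → Ω → ℝ}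
    (hmeas : ∀ j, Measurable (Z j)) (hindep : iIndepFun Z μ) (hL2 : ∀ j, MemLp (Z j) 2 μ)
    (hmean : ∀ j, μ[Z j] = 0) (K : ℕ) {c : ℝ} (hc : 0 < c) :
    μ {ω | ∃ k ≤ K, c ≤ |∑ j ∈ range (k + 1), Z j ω|}
      ≤ ENNReal.ofReal ((∑ j ∈ range (K + 1), variance (Z j) μ) / c ^ 2) := by
  have := hindep.isProbabilityMeasure
  have hS := (hindep.martingale_sum_range (fun j => (hmeas j).stronglyMeasurable)
    (fun j => (hL2 j).integrable one_le_two) hmean).measure_exists_le_abs_le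
    (fun k => memLp_finsetSum' _ fun j _ => hL2 j) K hc
  have hvar : ∫ ω, (∑ j ∈ range (K + 1), Z j) ω ^ 2 ∂μ
      = ∑ j ∈ range (K + 1), variance (Z j) μ := by
    rw [← variance_of_integral_eq_zero, IndepFun.variance_sum (fun j _ => hL2 j)
      (fun i _ j _ hij => hindep.indepFun hij)]
    · exact Finset.aemeasurable_sum _ fun j _ => (hmeas j).aemeasurable
    · simp only [Finset.sum_apply]
      rw [integral_finsetSum _ fun j _ => (hL2 j).integrable one_le_two]
      simp [hmean]
  rw [hvar] at hS
  simpa only [Finset.sum_apply] using hS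

theorem ProbabilityTheory.iIndepFun.measure_le_abs_sum_Icc_min_max_le {Z : ℕ → Ω → ℝ}
    (hmeas : ∀ j, Measurable (Z j))
    (hindep : iIndepFun Z μ) (hL2 : ∀ j, MemLp (Z j) 2 μ) (hmean : ∀ j, μ[Z j] = 0)
    (hvar : ∀ j, variance (Z j) μ = 1) (N : Ω → ℕ) (m x : ℝ) {c : ℝ} (hc : 0 < c) :
    μ {ω | 2 * c ≤ |∑ j ∈ Icc (min (N ω) ⌈m⌉₊) (max (N ω) ⌊m⌋₊), Z j ω|}
      ≤ μ {ω | x ≤ |(N ω : ℝ) - m|} + ENNReal.ofReal ((2 * |x| + 3) / c ^ 2) := by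
  set a := ⌊m⌋₊ - ⌈x⌉₊
  have hsub : {ω | 2 * c ≤ |∑ j ∈ Icc (min (N ω) ⌈m⌉₊) (max (N ω) ⌊m⌋₊), Z j ω|}
      ⊆ {ω | x ≤ |(N ω : ℝ) - m|}
        ∪ {ω | ∃ k ≤ 2 * ⌈x⌉₊, c ≤ |∑ j ∈ range (k + 1), Z (a + j) ω|} := by
    intro ω hω
    rcases le_or_gt x |(N ω : ℝ) - m| with hfar | hnear
    · exact Or.inl hfar
    · obtain ⟨hlo, hhi⟩ := Nat.floor_sub_ceil_le_min_and_max_le hnear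
      exact Or.inr (exists_le_abs_sum_range_of_le_abs_sum_Icc (Z · ω) hc hlo hhi hω)
  have hkol := (hindep.precomp (add_right_injective a)).measure_exists_le_abs_sum_range_le
    (fun j => hmeas _) (fun j => hL2 _) (fun j => hmean _) (2 * ⌈x⌉₊) hc
  have hceil : (⌈x⌉₊ : ℝ) ≤ |x| + 1 :=
    calc (⌈x⌉₊ : ℝ) ≤ ⌈|x|⌉₊ := by exact_mod_cast Nat.ceil_mono (le_abs_self x)
      _ ≤ |x| + 1 := (Nat.ceil_lt_add_one (abs_nonneg x)).le
  calc _ ≤ _ := measure_mono hsub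
    _ ≤ _ := measure_union_le _ _
    _ ≤ _ := by
      gcongr
      refine hkol.trans (ENNReal.ofReal_le_ofReal ?_)
      simp only [hvar, sum_const, card_range, nsmul_eq_mul, mul_one]
      gcongr
      push_cast
      linarith

end KolmogorovInequality

theorem stmt4_general {Ω : Type*} [MeasurableSpace Ω] (μ : Measure Ω) [IsProbabilityMeasure μ]
    (Z : ℕ → Ω → ℝ) (hmeas : ∀ j, Measurable (Z j))
    (hindep : iIndepFun Z μ)
    (hident : ∀ j, IdentDistrib (Z j) (Z 0) μ μ)
    (hL2 : MemLp (Z 0) 2 μ)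
    (hmean : ∫ ω, Z 0 ω ∂μ = 0)
    (hvar : ∫ ω, (Z 0 ω) ^ 2 ∂μ = 1)
    (N : ℕ → Ω → ℕ)
    (x : ℕ → ℝ)
    (hxn : Tendsto (fun n => x n / n) atTop (nhds 0))
    (hN : Tendsto
      (fun n => μ {ω | x n ≤ |(N n ω : ℝ) - ∫ ω', (N n ω' : ℝ) ∂μ|})
      atTop (nhds 0)) :
    TendstoInMeasure μ
      (fun (n : ℕ) ω => (1 / Real.sqrt (n : ℝ)) *
        ∑ j ∈ Finset.Icc (min (N n ω) ⌈∫ ω', (N n ω' : ℝ) ∂μ⌉₊)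
                          (max (N n ω) ⌊∫ ω', (N n ω' : ℝ) ∂μ⌋₊), Z j ω)
      atTop (fun _ => 0) := by
  have hL2' : ∀ j, MemLp (Z j) 2 μ := fun j => (hident j).symm.memLp_snd hL2
  have hmean' : ∀ j, μ[Z j] = 0 := fun j => (hident j).integral_eq.trans hmean
  have hvar' : ∀ j, variance (Z j) μ = 1 := fun j => by
    rw [(hident j).variance_eq, variance_of_integral_eq_zero hL2.aemeasurable hmean, hvar]
  rw [tendstoInMeasure_iff_dist]
  intro ε hε
  have hlim := ENNReal.tendsto_ofReal (hxn.abs_add_const_div_sq_mul_sqrt 2 3 (ε / 2))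
  rw [ENNReal.ofReal_zero] at hlim
  refine tendsto_of_tendsto_of_tendsto_of_le_of_le' tendsto_const_nhds (by simpa using hN.add hlim)
    (Eventually.of_forall fun n => zero_le) ?_
  filter_upwards [eventually_ge_atTop 1] with n hn
  have hsqrt : 0 < Real.sqrt n := Real.sqrt_pos.2 (by exact_mod_cast hn)
  refine le_trans (measure_mono fun ω hω => ?_) (hindep.measure_le_abs_sum_Icc_min_max_le hmeas
    hL2' hmean' hvar' (N n) _ (x n) (c := ε / 2 * Real.sqrt n) (by positivity))
  rw [Set.mem_ofPred_eq, Real.dist_eq, sub_zero, abs_mul, abs_of_pos (one_div_pos.2 hsqrt),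
    one_div_mul_eq_div, le_div_iff₀ hsqrt] at hω
  rw [Set.mem_ofPred_eq]
  linarith

theorem stmt4 {Ω : Type*} [MeasurableSpace Ω] (μ : Measure Ω) [IsProbabilityMeasure μ]
    (Z : ℕ → Ω → ℝ) (hmeas : ∀ j, Measurable (Z j))
    (hindep : iIndepFun Z μ)
    (hident : ∀ j, IdentDistrib (Z j) (Z 0) μ μ)
    (hL2 : MemLp (Z 0) 2 μ)
    (hmean : ∫ ω, Z 0 ω ∂μ = 0)
    (hvar : ∫ ω, (Z 0 ω) ^ 2 ∂μ = 1)
    (N : ℕ → Ω → ℕ) (hNmeas : ∀ n, Measurable (N n))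
    (x : ℕ → ℝ) (hx0 : ∀ n, 0 ≤ x n)
    (hxn : Tendsto (fun n => x n / n) atTop (nhds 0))
    (hN : Tendsto
      (fun n => μ {ω | x n ≤ |(N n ω : ℝ) - ∫ ω', (N n ω' : ℝ) ∂μ|})
      atTop (nhds 0)) :
    TendstoInMeasure μ
      (fun (n : ℕ) ω => (1 / Real.sqrt (n : ℝ)) *
        ∑ j ∈ Finset.Icc (min (N n ω) ⌈∫ ω', (N n ω' : ℝ) ∂μ⌉₊)
                          (max (N n ω) ⌊∫ ω', (N n ω' : ℝ) ∂μ⌋₊), Z j ω)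
      atTop (fun _ => 0) :=
  stmt4_general μ Z hmeas hindep hident hL2 hmean hvar N x hxn hN
end
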